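/- Let w be a finite rich word. If u and v are factors of w having the same longest palindromic prefix and the same longest palindromic suffix, then u = v. -/

import Mathlib

/-- The finset of (distinct) palindromic factors of a finite word `w`,
including the empty word. -/
def palFactors {A : Type*} [DecidableEq A] (w : List A) : Finset (List A) :=
  ((w.inits.flatMap List.tails).filter (fun u => u.reverse = u)).toFinset

/-- A finite word `w` is rich if it has exactly `|w| + 1` distinct palindromic factors. -/
def Rich {A : Type*} [DecidableEq A] (w : List A) : Prop :=
  (palFactors w).card = w.length + 1

/-- `p` is the longest palindromic prefix of `u`. -/
def LongestPalPrefix {A : Type*} (p u : List A) : Prop :=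
  p <+: u ∧ p.reverse = p ∧ ∀ p' : List A, p' <+: u → p'.reverse = p' → p'.length ≤ p.length

/-- `q` is the longest palindromic suffix of `u`. -/
def LongestPalSuffix {A : Type*} (q u : List A) : Prop :=
  q <:+ u ∧ q.reverse = q ∧ ∀ q' : List A, q' <:+ u → q'.reverse = q' → q'.length ≤ q.length

/-!
Richness is hereditary and forces the longest palindromic suffix of every rich word `z ++ [a]`
to be a new palindrome, i.e. unioccurrent in `z ++ [a]`; by reversal the longest palindromic
prefix is unioccurrent too. Hence if one of `u`, `v` is a factor of the other they coincide.
Otherwise, shrinking the ambient word, `u` is a prefix and `v` a suffix of `w`. The first return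
to `p` in `w` is a palindrome, since complete returns to palindromes in rich words are
palindromes, and it strictly contains `u`; the longest palindromic suffix of `w` strictly
contains `v`. Mirroring inside these palindromes places `u.reverse` and `v.reverse` in
`w.dropLast`, where they share the longest palindromic prefix `q` and suffix `p`, and induction
on `|w|` concludes.
-/

open List

namespace List

variable {A : Type*}

theorem infix_dropLast_of_prefix_of_length_lt {x y w : List A} (hxy : x <+: y)
    (hlt : x.length < y.length) (hy : y <:+: w) : x <:+: w.dropLast := by
  obtain ⟨s, t, rfl⟩ := hy
  obtain ⟨e, rfl⟩ := hxy
  have he : e ++ t ≠ [] := fun h => by simp_all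
  exact ⟨s, (e ++ t).dropLast, by simp [he]⟩

theorem infix_dropLast_or_suffix {x w : List A} (h : x <:+: w) : x <:+: w.dropLast ∨ x <:+ w := by
  rcases w.eq_nil_or_concat' with rfl | ⟨z, a, rfl⟩
  · exact Or.inr (suffix_nil.2 (infix_nil.1 h))
  · rw [dropLast_concat]
    exact (infix_concat_iff.1 h).symm

theorem infix_tail_or_prefix {x w : List A} (h : x <:+: w) : x <:+: w.tail ∨ x <+: w := by
  cases w with
  | nil => exact Or.inr (prefix_nil.2 (infix_nil.1 h))
  | cons a z => exact (infix_cons_iff.1 h).symm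

theorem IsSuffix.infix_tail_of_ne {x w : List A} (h : x <:+ w) (hne : x ≠ w) : x <:+: w.tail := by
  cases w with
  | nil => exact absurd (suffix_nil.1 h) hne
  | cons a z => exact ((suffix_cons_iff.1 h).resolve_left hne).isInfix

theorem IsPrefix.infix_dropLast_of_ne {x w : List A} (h : x <+: w) (hne : x ≠ w) :
    x <:+: w.dropLast :=
  infix_dropLast_of_prefix_of_length_lt h
    (lt_of_le_of_ne h.length_le fun hl => hne (h.eq_of_length hl)) (infix_refl w)

theorem infix_dropLast_or_infix_tail_or_prefix_suffix {u v w : List A} (hu : u <:+: w)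
    (hv : v <:+: w) (hu' : u ≠ w) (hv' : v ≠ w) :
    (u <:+: w.dropLast ∧ v <:+: w.dropLast) ∨ (u <:+: w.tail ∧ v <:+: w.tail) ∨
      (u <+: w ∧ v <:+ w) ∨ (v <+: w ∧ u <:+ w) := by
  have := infix_dropLast_or_suffix hu
  have := infix_tail_or_prefix hu
  have := infix_dropLast_or_suffix hv
  have := infix_tail_or_prefix hv
  have := fun h : u <:+ w => h.infix_tail_of_ne hu'
  have := fun h : u <+: w => h.infix_dropLast_of_ne hu'
  have := fun h : v <:+ w => h.infix_tail_of_ne hv'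
  have := fun h : v <+: w => h.infix_dropLast_of_ne hv'
  tauto

theorem IsSuffix.isPrefix_of_reverse_eq {s t : List A} (h : s <:+ t) (hs : s.reverse = s)
    (ht : t.reverse = t) : s <+: t := by
  simpa [hs, ht] using h.reverse

end List

section Palindromes

variable {A : Type*}

theorem exists_longestPalSuffix (w : List A) : ∃ t, LongestPalSuffix t w := by
  classical
  obtain ⟨t, ht, hmax⟩ := Finset.exists_max_image
    (w.tails.filter fun t => t.reverse = t).toFinset length ⟨[], by simp⟩
  simp only [mem_toFinset, mem_filter, mem_tails, decide_eq_true_eq] at ht hmax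
  exact ⟨t, ht.1, ht.2, fun t' h₁ h₂ => hmax t' ⟨h₁, h₂⟩⟩

theorem LongestPalSuffix.unique {t t' w : List A} (h : LongestPalSuffix t w)
    (h' : LongestPalSuffix t' w) : t = t' :=
  (suffix_of_suffix_length_le h.1 h'.1 (h'.2.2 t h.1 h.2.1)).eq_of_length
    (le_antisymm (h'.2.2 t h.1 h.2.1) (h.2.2 t' h'.1 h'.2.1))

theorem LongestPalSuffix.of_suffix {t v w : List A} (ht : LongestPalSuffix t w) (hv : v <:+ w)
    (hlen : t.length ≤ v.length) : LongestPalSuffix t v :=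
  ⟨suffix_of_suffix_length_le ht.1 hv hlen, ht.2.1,
    fun t' h₁ h₂ => ht.2.2 t' (h₁.trans hv) h₂⟩

theorem LongestPalPrefix.reverse {p u : List A} (h : LongestPalPrefix p u) :
    LongestPalSuffix p u.reverse :=
  ⟨by simpa [h.2.1] using h.1.reverse, h.2.1, fun q hq hqp => by
    simpa using h.2.2 q.reverse (by simpa using hq.reverse) (by simp [hqp])⟩

theorem LongestPalSuffix.reverse {q u : List A} (h : LongestPalSuffix q u) :
    LongestPalPrefix q u.reverse :=
  ⟨by simpa [h.2.1] using h.1.reverse, h.2.1, fun p hp hpp => by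
    simpa using h.2.2 p.reverse (by simpa using hp.reverse) (by simp [hpp])⟩

theorem reverse_infix_dropLast_of_longestPalSuffix {q v w : List A} (hv : v <:+ w)
    (hq : LongestPalSuffix q v) (hqw : ¬ LongestPalSuffix q w) : v.reverse <:+: w.dropLast := by
  obtain ⟨t, ht⟩ := exists_longestPalSuffix w
  have hvt : v.length < t.length := by
    by_contra! htv
    exact hqw (hq.unique (ht.of_suffix hv htv) ▸ ht)
  have hvt' : v.reverse <+: t := by
    simpa [ht.2.1] using (suffix_of_suffix_length_le hv ht.1 hvt.le).reverse
  exact infix_dropLast_of_prefix_of_length_lt hvt' (by simpa using hvt) ht.1.isInfix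

def IsCompleteReturn (s r : List A) : Prop :=
  s <+: r ∧ s <:+ r ∧ s ≠ r ∧ ∀ α β, α ++ s ++ β = r → α = [] ∨ β = []

theorem IsCompleteReturn.reverse {s r : List A} (hs : s.reverse = s) (h : IsCompleteReturn s r) :
    IsCompleteReturn s r.reverse := by
  obtain ⟨hpre, hsuf, hne, hocc⟩ := h
  refine ⟨by simpa [hs] using hsuf.reverse, by simpa [hs] using hpre.reverse,
    fun h => hne (by rw [← reverse_reverse r, ← h, hs]), fun α β h => ?_⟩
  have := hocc β.reverse α.reverse (by rw [← reverse_reverse r, ← h]; simp [hs])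
  simpa [or_comm] using this

theorem exists_isCompleteReturn_prefix {s a : List A} (hs : s <+: a ++ s) (ha : a ≠ []) :
    ∃ r, IsCompleteReturn s r ∧ r <+: a ++ s := by
  induction hn : a.length using Nat.strong_induction_on generalizing a with
  | _ n ih =>
    subst hn
    by_cases hocc : ∀ α β, α ++ s ++ β = a ++ s → α = [] ∨ β = []
    · refine ⟨a ++ s, ⟨hs, suffix_append a s, fun h => ha ?_, hocc⟩, prefix_rfl⟩
      simpa using congrArg length h
    push Not at hocc
    obtain ⟨α, β, hαβ, hα, hβ⟩ := hocc
    have hlt : α.length < a.length := by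
      have := congrArg length hαβ
      simp only [length_append] at this
      have := length_pos_iff.2 hβ
      omega
    have hpre : α ++ s <+: a ++ s := ⟨β, hαβ⟩
    obtain ⟨r, hr, hrα⟩ := ih _ hlt (prefix_of_prefix_length_le hs hpre (by simp)) hα rfl
    exact ⟨r, hr, hrα.trans hpre⟩

end Palindromes

section Rich

variable {A : Type*} [DecidableEq A]

theorem mem_palFactors {x w : List A} : x ∈ palFactors w ↔ x <:+: w ∧ x.reverse = x := by
  simp only [palFactors, mem_toFinset, mem_filter, mem_flatMap, mem_inits, mem_tails,
    decide_eq_true_eq]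
  constructor
  · rintro ⟨⟨y, hy, hxy⟩, hx⟩
    exact ⟨hxy.isInfix.trans hy.isInfix, hx⟩
  · rintro ⟨⟨s, t, rfl⟩, hx⟩
    exact ⟨⟨s ++ x, prefix_append _ t, suffix_append s x⟩, hx⟩

theorem palFactors_reverse (w : List A) : palFactors w.reverse = palFactors w := by
  ext x
  simp only [mem_palFactors]
  constructor
  · rintro ⟨hx, hxp⟩
    exact ⟨reverse_infix.1 (hxp.symm ▸ hx), hxp⟩
  · rintro ⟨hx, hxp⟩
    exact ⟨hxp ▸ reverse_infix.2 hx, hxp⟩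

theorem Rich.reverse {w : List A} (hw : Rich w) : Rich w.reverse := by
  rwa [Rich, palFactors_reverse, length_reverse]

theorem palFactors_concat_subset {z t : List A} {a : A} (ht : LongestPalSuffix t (z ++ [a])) :
    palFactors (z ++ [a]) ⊆ insert t (palFactors z) := by
  intro x hx
  obtain ⟨hxw, hxp⟩ := mem_palFactors.1 hx
  rw [Finset.mem_insert, mem_palFactors]
  rcases infix_concat_iff.1 hxw with hxs | hxz
  · have hxt : x <:+ t := suffix_of_suffix_length_le hxs ht.1 (ht.2.2 x hxs hxp)
    rcases eq_or_ne x t with rfl | hne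
    · exact Or.inl rfl
    · refine Or.inr ⟨?_, hxp⟩
      simpa using infix_dropLast_of_prefix_of_length_lt (hxt.isPrefix_of_reverse_eq hxp ht.2.1)
        (lt_of_le_of_ne hxt.length_le fun h => hne (hxt.eq_of_length h)) ht.1.isInfix
  · exact Or.inr ⟨hxz, hxp⟩

theorem card_palFactors_le (w : List A) : (palFactors w).card ≤ w.length + 1 := by
  induction w using reverseRecOn with
  | nil => simp [palFactors]
  | append_singleton z a ih =>
    obtain ⟨t, ht⟩ := exists_longestPalSuffix (z ++ [a])
    calc (palFactors (z ++ [a])).card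
        ≤ (insert t (palFactors z)).card := Finset.card_le_card (palFactors_concat_subset ht)
      _ ≤ (palFactors z).card + 1 := Finset.card_insert_le _ _
      _ ≤ (z ++ [a]).length + 1 := by simp [ih]

theorem Rich.of_concat {z : List A} {a : A} (hw : Rich (z ++ [a])) : Rich z := by
  obtain ⟨t, ht⟩ := exists_longestPalSuffix (z ++ [a])
  have hle := (Finset.card_le_card (palFactors_concat_subset ht)).trans (Finset.card_insert_le _ _)
  have := card_palFactors_le z
  rw [Rich, length_append, length_singleton] at hw
  rw [Rich]
  omega

theorem Rich.longestPalSuffix_not_mem {z t : List A} {a : A} (hw : Rich (z ++ [a]))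
    (ht : LongestPalSuffix t (z ++ [a])) : t ∉ palFactors z := by
  intro h
  have hle := Finset.card_le_card (palFactors_concat_subset ht)
  rw [Finset.insert_eq_of_mem h] at hle
  have := card_palFactors_le z
  rw [Rich, length_append, length_singleton] at hw
  omega

theorem Rich.of_prefix {x w : List A} (hw : Rich w) (h : x <+: w) : Rich x := by
  induction w using reverseRecOn with
  | nil => rwa [prefix_nil.1 h]
  | append_singleton z a ih =>
    rcases prefix_concat_iff.1 h with rfl | hxz
    · exact hw
    · exact ih hw.of_concat hxz

theorem Rich.of_suffix {x w : List A} (hw : Rich w) (h : x <:+ w) : Rich x := by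
  simpa using (hw.reverse.of_prefix h.reverse).reverse

theorem Rich.of_infix {x w : List A} (hw : Rich w) (h : x <:+: w) : Rich x := by
  obtain ⟨s, t, rfl⟩ := h
  exact (hw.of_prefix (prefix_append _ t)).of_suffix (suffix_append s x)

theorem Rich.eq_nil_of_longestPalSuffix {w t a b : List A} (hw : Rich w)
    (ht : LongestPalSuffix t w) (h : a ++ t ++ b = w) : b = [] := by
  rcases b.eq_nil_or_concat' with rfl | ⟨b', c, rfl⟩
  · rfl
  rw [← append_assoc] at h
  subst h
  exact absurd (mem_palFactors.2 ⟨infix_append a t b', ht.2.1⟩) (hw.longestPalSuffix_not_mem ht)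

theorem Rich.eq_nil_of_longestPalPrefix {w p a b : List A} (hw : Rich w)
    (hp : LongestPalPrefix p w) (h : a ++ p ++ b = w) : a = [] := by
  simpa using hw.reverse.eq_nil_of_longestPalSuffix hp.reverse
    (a := b.reverse) (b := a.reverse) (by rw [← h]; simp [hp.2.1])

theorem Rich.reverse_eq_of_isCompleteReturn {w s r : List A} (hw : Rich w) (hs : s.reverse = s)
    (hr : IsCompleteReturn s r) (hrw : r <:+: w) : r.reverse = r := by
  induction w using reverseRecOn generalizing r with
  | nil =>
    obtain rfl := infix_nil.1 hrw
    exact absurd (prefix_nil.1 hr.1) hr.2.2.1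
  | append_singleton z a ih =>
    obtain hrw | hrw := (infix_concat_iff.1 hrw).symm
    · exact ih hw.of_concat hr hrw
    obtain ⟨t, ht⟩ := exists_longestPalSuffix (z ++ [a])
    rcases lt_trichotomy t.length r.length with hlt | heq | hgt
    · -- `t` would be an occurrence of `s` strictly inside `r`, or a second occurrence of the
      -- unioccurrent `t = s`
      exfalso
      obtain ⟨c, hc⟩ := suffix_of_suffix_length_le ht.1 hrw hlt.le
      have hst : s <:+ t := suffix_of_suffix_length_le (hr.2.1.trans hrw) ht.1
        (ht.2.2 s (hr.2.1.trans hrw) hs)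
      obtain ⟨d, hd⟩ := hst.isPrefix_of_reverse_eq hs ht.2.1
      rcases hr.2.2.2 c d (by rw [append_assoc, hd, hc]) with rfl | rfl
      · simp [← hc] at hlt
      · rw [append_nil] at hd
        subst hd
        obtain ⟨e, he⟩ := hr.1
        obtain ⟨b, hb⟩ := hrw
        obtain rfl : e = [] :=
          hw.eq_nil_of_longestPalSuffix ht (a := b) (by rw [append_assoc, he, hb])
        exact hr.2.2.1 (by rw [← he, append_nil])
    · exact (suffix_of_suffix_length_le ht.1 hrw heq.le).eq_of_length heq ▸ ht.2.1
    · have hrt : r.reverse <+: t := by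
        simpa [ht.2.1] using (suffix_of_suffix_length_le hrw ht.1 hgt.le).reverse
      have := ih hw.of_concat (hr.reverse hs)
        (by simpa using infix_dropLast_of_prefix_of_length_lt hrt (by simpa using hgt) ht.1.isInfix)
      simpa using this.symm

theorem Rich.eq_of_infix {u v p q : List A} (hv : Rich v) (huv : u <:+: v)
    (hpu : LongestPalPrefix p u) (hpv : LongestPalPrefix p v)
    (hqu : LongestPalSuffix q u) (hqv : LongestPalSuffix q v) : u = v := by
  obtain ⟨c, d, rfl⟩ := huv
  obtain ⟨e, he⟩ := hpu.1
  obtain rfl : c = [] := hv.eq_nil_of_longestPalPrefix hpv (b := e ++ d) (by simp [← he])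
  obtain ⟨f, hf⟩ := hqu.1
  obtain rfl : d = [] := hv.eq_nil_of_longestPalSuffix hqv (a := f) (by simp [hf])
  simp

/-- The first return to `p` in `w` is a palindrome strictly containing `u` and strictly
contained in `w`. -/
theorem Rich.reverse_infix_dropLast_of_longestPalPrefix {w u p a : List A} (hw : Rich w)
    (hu : u <+: w) (hp : LongestPalPrefix p u) (ha : a ≠ []) (hap : a ++ p <+: w)
    (hlt : (a ++ p).length < w.length) : u.reverse <:+: w.dropLast := by
  obtain ⟨r, hr, hra⟩ := exists_isCompleteReturn_prefix
    (prefix_of_prefix_length_le (hp.1.trans hu) hap (by simp)) ha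
  have hrw : r <+: w := hra.trans hap
  have hur : u.length < r.length := by
    by_contra! hru
    obtain ⟨α, hα⟩ := hr.2.1
    obtain ⟨β, hβ⟩ := prefix_of_prefix_length_le hrw hu hru
    obtain rfl : α = [] := (hw.of_prefix hu).eq_nil_of_longestPalPrefix hp (by rw [hα, hβ])
    exact hr.2.2.1 (by simpa using hα)
  have hrpal := hw.reverse_eq_of_isCompleteReturn hp.2.1 hr hrw.isInfix
  have hur' : u.reverse <:+ r := by
    simpa [hrpal] using (prefix_of_prefix_length_le hu hrw hur.le).reverse
  exact hur'.isInfix.trans (infix_dropLast_of_prefix_of_length_lt hrw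
    (lt_of_le_of_lt hra.length_le hlt) (infix_refl w))

theorem Rich.reverse_infix_dropLast_of_prefix_of_suffix {w u v p q : List A} (hw : Rich w)
    (hu : u <+: w) (hv : v <:+ w) (huv : ¬ u <:+: v) (hvu : ¬ v <:+: u)
    (hpu : LongestPalPrefix p u) (hpv : LongestPalPrefix p v)
    (hqu : LongestPalSuffix q u) (hqv : LongestPalSuffix q v) :
    u.reverse <:+: w.dropLast ∧ v.reverse <:+: w.dropLast := by
  obtain ⟨a, rfl⟩ := hv
  constructor
  · have ha : a ≠ [] := by
      rintro rfl
      exact huv (by simpa using hu.isInfix)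
    have hpv' : p.length < v.length := lt_of_le_of_ne hpv.1.length_le fun h =>
      hvu (hpv.1.eq_of_length h ▸ hpu.1).isInfix
    exact hw.reverse_infix_dropLast_of_longestPalPrefix hu hpu ha
      ((prefix_append_right_inj a).2 hpv.1) (by simp; omega)
  · refine reverse_infix_dropLast_of_longestPalSuffix (suffix_append a v) hqv fun hqw => hvu ?_
    obtain ⟨b, hb⟩ := hu
    obtain ⟨f, hf⟩ := hqu.1
    obtain rfl : b = [] := hw.eq_nil_of_longestPalSuffix hqw (a := f) (by rw [hf, hb])
    rw [append_nil] at hb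
    exact hb ▸ (suffix_append a v).isInfix

end Rich

/-- If `u` and `v` are factors of a finite rich word `w` having the same longest
palindromic prefix and the same longest palindromic suffix, then `u = v`. -/
theorem factors_eq_of_same_longest_pal_prefix_suffix {A : Type*} [DecidableEq A]
    (w u v p q : List A) (hw : Rich w) (hu : u <:+: w) (hv : v <:+: w)
    (hpu : LongestPalPrefix p u) (hpv : LongestPalPrefix p v)
    (hqu : LongestPalSuffix q u) (hqv : LongestPalSuffix q v) :
    u = v := by
  induction hn : w.length using Nat.strong_induction_on generalizing w u v p q with
  | _ n ih =>
    subst hn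
    by_cases huv : u <:+: v
    · exact (hw.of_infix hv).eq_of_infix huv hpu hpv hqu hqv
    by_cases hvu : v <:+: u
    · exact ((hw.of_infix hu).eq_of_infix hvu hpv hpu hqv hqu).symm
    have hne : w ≠ [] := by
      rintro rfl
      exact huv (by rw [infix_nil.1 hu]; exact nil_infix)
    have hdrop : w.dropLast.length < w.length := by simpa using length_pos_iff.2 hne
    have htail : w.tail.length < w.length := by simpa using length_pos_iff.2 hne
    rcases infix_dropLast_or_infix_tail_or_prefix_suffix hu hv (fun h => hvu (h ▸ hv))
        (fun h => huv (h ▸ hu)) with ⟨hu', hv'⟩ | ⟨hu', hv'⟩ | hcover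
    · exact ih _ hdrop _ _ _ _ _ (hw.of_prefix w.dropLast_prefix) hu' hv' hpu hpv hqu hqv rfl
    · exact ih _ htail _ _ _ _ _ (hw.of_suffix w.tail_suffix) hu' hv' hpu hpv hqu hqv rfl
    obtain ⟨hu', hv'⟩ : u.reverse <:+: w.dropLast ∧ v.reverse <:+: w.dropLast := by
      rcases hcover with ⟨hu', hv'⟩ | ⟨hv', hu'⟩
      · exact hw.reverse_infix_dropLast_of_prefix_of_suffix hu' hv' huv hvu hpu hpv hqu hqv
      · exact (hw.reverse_infix_dropLast_of_prefix_of_suffix hv' hu' hvu huv hpv hpu hqv hqu).symm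
    exact reverse_injective (ih _ hdrop _ _ _ _ _ (hw.of_prefix w.dropLast_prefix) hu' hv'
      hqu.reverse hqv.reverse hpu.reverse hpv.reverse rfl)
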